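/- Let Γ be a random symmetric d×d matrix with 0 ⪯ Γ ⪯ I_d almost surely and finite moments, and let Γ⁽¹⁾,…,Γ⁽ⁿ⁾ be i.i.d. copies. Let Γ̃ = √((1/n)Σᵢ(Γ⁽ⁱ⁾)²). Then Γ̃ ⪰ (1/n)Σᵢ Γ⁽ⁱ⁾ almost surely, and consequently Tr(E[Γ²] − E[Γ̃]²) ≤ Tr(E[Γ²] − E[Γ]²). -/

import Mathlib

/-!
The sample variance `(1/n) Σₖ (Γ⁽ᵏ⁾ - Γ̄)²` about the sample mean `Γ̄` is positive semidefinite,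
so `Γ̄² ⪯ (1/n) Σₖ (Γ⁽ᵏ⁾)² = Γ̃²`, and monotonicity of the square root (for `S, A ⪰ 0`,
`A² ⪯ S²` implies `A ⪯ S`) gives `Γ̄ ⪯ Γ̃`. Taking expectations, `0 ⪯ E[Γ] = E[Γ̄] ⪯ E[Γ̃]`, and
`0 ⪯ X ⪯ Y` implies `Tr X² ≤ Tr Y²` because `Tr Y² - Tr X² = Tr((Y - X)(Y + X))` is the trace of a
product of two positive semidefinite matrices.
-/

open MeasureTheory ProbabilityTheory
open scoped Classical

instance matrixMeasurableSpace {m n : Type*} :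
    MeasurableSpace (Matrix m n ℝ) :=
  inferInstanceAs (MeasurableSpace (m → n → ℝ))

/-- The PSD square root of a matrix (zero if the matrix is not PSD). -/
noncomputable def psdSqrt {d : ℕ} (M : Matrix (Fin d) (Fin d) ℝ) :
    Matrix (Fin d) (Fin d) ℝ :=
  if h : M.PosSemidef then
    h.1.eigenvectorUnitary.1 * Matrix.diagonal ((↑) ∘ (√·) ∘ h.1.eigenvalues) *
      (star h.1.eigenvectorUnitary : Matrix (Fin d) (Fin d) ℝ)
  else 0

/-- Entrywise (Bochner) integral of a matrix-valued map. -/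
noncomputable def matInt {Ω : Type*} [MeasurableSpace Ω] (μ : Measure Ω) {d : ℕ}
    (f : Ω → Matrix (Fin d) (Fin d) ℝ) : Matrix (Fin d) (Fin d) ℝ :=
  Matrix.of fun i j => ∫ ω, f ω i j ∂μ

open Matrix

section Loewner

variable {m : Type*} [Fintype m]

theorem Matrix.PosSemidef.trace_mul_nonneg {P Q : Matrix m m ℝ} (hP : P.PosSemidef)
    (hQ : Q.PosSemidef) : 0 ≤ (P * Q).trace := by
  obtain ⟨k, v, rfl⟩ := posSemidef_iff_eq_sum_vecMulVec.mp hP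
  rw [Finset.sum_mul, trace_sum]
  refine Finset.sum_nonneg fun i _ => ?_
  rw [vecMulVec_mul, trace_vecMulVec, dotProduct_comm, ← dotProduct_mulVec]
  simpa using hQ.dotProduct_mulVec_nonneg (v i)

variable [DecidableEq m]

theorem Matrix.PosSemidef.trace_sq_le_trace_sq {X Y : Matrix m m ℝ} (hX : X.PosSemidef)
    (hXY : (Y - X).PosSemidef) : (X ^ 2).trace ≤ (Y ^ 2).trace := by
  have hYX : (Y + X).PosSemidef := by
    simpa only [sub_add_cancel, add_assoc] using (hXY.add hX).add hX
  have h := hXY.trace_mul_nonneg hYX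
  rw [show (Y - X) * (Y + X) = Y ^ 2 - X ^ 2 + (Y * X - X * Y) by noncomm_ring, trace_add,
    trace_sub, trace_sub, trace_mul_comm Y X, sub_self, add_zero] at h
  exact sub_nonneg.mp h

/-- If `(S - A) v = t v` with `t < 0`, then `0 ≤ vᵀ (S² - A²) v = t (vᵀ S v + vᵀ A v)` forces
`vᵀ S v = vᵀ A v = 0`, contradicting `vᵀ (S - A) v = t ‖v‖² < 0`. -/
theorem Matrix.PosSemidef.sub_of_sq_sub_sq {S A : Matrix m m ℝ} (hS : S.PosSemidef)
    (hA : A.PosSemidef) (h : (S ^ 2 - A ^ 2).PosSemidef) : (S - A).PosSemidef := by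
  have hSA : (S - A).IsHermitian := hS.1.sub hA.1
  refine hSA.posSemidef_iff_eigenvalues_nonneg.mpr fun i => ?_
  by_contra! ht
  rw [Pi.zero_apply] at ht
  set t := hSA.eigenvalues i
  set v : m → ℝ := ⇑(hSA.eigenvectorBasis i)
  have hv : (S - A) *ᵥ v = t • v := hSA.mulVec_eigenvectorBasis i
  have hvS : v ᵥ* (S - A) = t • v := by
    rw [← mulVec_transpose, ← conjTranspose_eq_transpose_of_trivial, hSA.eq, hv]
  have hv0 : 0 < v ⬝ᵥ v := by
    refine lt_of_le_of_ne (dotProduct_self_star_nonneg v) (Ne.symm fun h0 => ?_)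
    exact hSA.eigenvectorBasis.orthonormal.ne_zero i
      (WithLp.ofLp_injective 2 (dotProduct_self_eq_zero.mp h0))
  have hsq : v ⬝ᵥ (S ^ 2 - A ^ 2) *ᵥ v = t * (v ⬝ᵥ S *ᵥ v + v ⬝ᵥ A *ᵥ v) := by
    rw [show S ^ 2 - A ^ 2 = S * (S - A) + (S - A) * A by noncomm_ring, add_mulVec,
      dotProduct_add, ← mulVec_mulVec, ← mulVec_mulVec, hv, mulVec_smul,
      dotProduct_mulVec v (S - A), hvS]
    simp only [dotProduct_smul, smul_dotProduct, smul_eq_mul, mul_add]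
  have hdiff : v ⬝ᵥ S *ᵥ v - v ⬝ᵥ A *ᵥ v = t * (v ⬝ᵥ v) := by
    rw [← dotProduct_sub, ← sub_mulVec, hv, dotProduct_smul, smul_eq_mul]
  have hq := h.dotProduct_mulVec_nonneg v
  have hqS := hS.dotProduct_mulVec_nonneg v
  have hqA := hA.dotProduct_mulVec_nonneg v
  simp only [star_trivial] at hq hqS hqA
  have hsum : v ⬝ᵥ S *ᵥ v + v ⬝ᵥ A *ᵥ v ≤ 0 := nonpos_of_mul_nonneg_right (hsq ▸ hq) ht
  linarith [mul_neg_of_neg_of_pos ht hv0]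

end Loewner

section SampleMean

variable {m : Type*} [Fintype m] [DecidableEq m] {n : ℕ}

theorem posSemidef_mean_sq_sub_sq_mean (X : Fin n → Matrix m m ℝ)
    (hX : ∀ k, (X k).IsHermitian) :
    ((n : ℝ)⁻¹ • ∑ k, X k ^ 2 - ((n : ℝ)⁻¹ • ∑ k, X k) ^ 2).PosSemidef := by
  rcases Nat.eq_zero_or_pos n with rfl | hn
  · simpa using PosSemidef.zero
  set A := (n : ℝ)⁻¹ • ∑ k, X k
  have hnA : ∑ k, X k = (n : ℝ) • A := by
    rw [smul_smul, mul_inv_cancel₀ (by positivity), one_smul]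
  have hsum : ∑ k, (X k - A) ^ 2 = ∑ k, X k ^ 2 - (n : ℝ) • A ^ 2 := by
    simp only [sq, sub_mul, mul_sub, Finset.sum_sub_distrib, ← Finset.sum_mul, ← Finset.mul_sum,
      hnA, Finset.sum_const, Finset.card_univ, Fintype.card_fin, smul_mul_assoc, mul_smul_comm,
      ← Nat.cast_smul_eq_nsmul ℝ n (A * A)]
    abel
  have hvar : (n : ℝ)⁻¹ • ∑ k, X k ^ 2 - A ^ 2 = (n : ℝ)⁻¹ • ∑ k, (X k - A) ^ 2 := by
    rw [hsum, smul_sub, smul_smul, inv_mul_cancel₀ (by positivity), one_smul]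
  rw [hvar]
  have hA : A.IsHermitian :=
    (isSelfAdjoint_sum _ fun k _ => (hX k).isSelfAdjoint).isHermitian.smul (.all _)
  refine .smul (posSemidef_sum _ fun k _ => ?_) (by positivity)
  simpa only [((hX k).sub hA).eq, sq] using posSemidef_conjTranspose_mul_self (X k - A)

end SampleMean

section PsdSqrt

variable {d : ℕ}

theorem psdSqrt_eq_cfc {B : Matrix (Fin d) (Fin d) ℝ} (hB : B.PosSemidef) :
    psdSqrt B = cfc Real.sqrt B := by
  rw [psdSqrt, dif_pos hB, hB.1.cfc_eq, IsHermitian.cfc, Unitary.conjStarAlgAut_apply]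
  rfl

open scoped MatrixOrder

theorem posSemidef_psdSqrt {B : Matrix (Fin d) (Fin d) ℝ} (hB : B.PosSemidef) :
    (psdSqrt B).PosSemidef := by
  rw [psdSqrt_eq_cfc hB, ← nonneg_iff_posSemidef]
  exact cfc_nonneg fun x _ => Real.sqrt_nonneg x

theorem psdSqrt_sq {B : Matrix (Fin d) (Fin d) ℝ} (hB : B.PosSemidef) : psdSqrt B ^ 2 = B := by
  rw [psdSqrt_eq_cfc hB, ← cfc_pow ..]
  nth_rewrite 2 [← cfc_id' ℝ B]
  exact cfc_congr fun x hx => Real.sq_sqrt (spectrum_nonneg_of_nonneg hB.nonneg hx)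

theorem posSemidef_psdSqrt_sub {A B : Matrix (Fin d) (Fin d) ℝ} (hA : A.PosSemidef)
    (h : (B - A ^ 2).PosSemidef) : (psdSqrt B - A).PosSemidef := by
  have hB : B.PosSemidef := by simpa using h.add (hA.pow 2)
  exact (posSemidef_psdSqrt hB).sub_of_sq_sub_sq hA (by rwa [psdSqrt_sq hB])

theorem posSemidef_psdSqrt_mean_sq_sub_mean {n : ℕ} (X : Fin n → Matrix (Fin d) (Fin d) ℝ)
    (hX : ∀ k, (X k).PosSemidef) :
    (psdSqrt ((n : ℝ)⁻¹ • ∑ k, X k ^ 2) - (n : ℝ)⁻¹ • ∑ k, X k).PosSemidef :=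
  posSemidef_psdSqrt_sub ((posSemidef_sum _ fun k _ => hX k).smul (by positivity))
    (posSemidef_mean_sq_sub_sq_mean X fun k => (hX k).1)

end PsdSqrt

section MatInt

variable {Ω : Type*} [MeasurableSpace Ω] {μ : Measure Ω} {d : ℕ}

theorem dotProduct_matInt_mulVec {f : Ω → Matrix (Fin d) (Fin d) ℝ}
    (hf : ∀ i j, Integrable (fun ω => f ω i j) μ) (x : Fin d → ℝ) :
    x ⬝ᵥ matInt μ f *ᵥ x = ∫ ω, x ⬝ᵥ f ω *ᵥ x ∂μ := by
  have hterm : ∀ i j, Integrable (fun ω => x i * (f ω i j * x j)) μ := fun i j =>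
    ((hf i j).mul_const _).const_mul _
  simp only [dotProduct, mulVec, matInt, of_apply, Finset.mul_sum]
  rw [integral_finsetSum _ fun i _ => integrable_finsetSum _ fun j _ => hterm i j]
  refine Finset.sum_congr rfl fun i _ => ?_
  rw [integral_finsetSum _ fun j _ => hterm i j]
  refine Finset.sum_congr rfl fun j _ => ?_
  rw [integral_const_mul, integral_mul_const]

theorem posSemidef_matInt {f : Ω → Matrix (Fin d) (Fin d) ℝ}
    (hf : ∀ i j, Integrable (fun ω => f ω i j) μ) (h : ∀ᵐ ω ∂μ, (f ω).PosSemidef) :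
    (matInt μ f).PosSemidef := by
  refine .of_dotProduct_mulVec_nonneg ?_ fun x => ?_
  · ext i j
    exact integral_congr_ae (h.mono fun ω hω => by simpa using congrFun (congrFun hω.1.eq i) j)
  · rw [star_trivial, dotProduct_matInt_mulVec hf]
    exact integral_nonneg_of_ae (h.mono fun ω hω => by simpa using hω.dotProduct_mulVec_nonneg x)

theorem matInt_sub {f g : Ω → Matrix (Fin d) (Fin d) ℝ}
    (hf : ∀ i j, Integrable (fun ω => f ω i j) μ) (hg : ∀ i j, Integrable (fun ω => g ω i j) μ) :
    matInt μ (fun ω => f ω - g ω) = matInt μ f - matInt μ g := by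
  ext i j
  exact integral_sub (hf i j) (hg i j)

theorem matInt_eq_of_identDistrib {X Y : Ω → Matrix (Fin d) (Fin d) ℝ}
    (h : IdentDistrib X Y μ μ) : matInt μ X = matInt μ Y := by
  ext i j
  exact (h.comp ((measurable_pi_apply j).comp (measurable_pi_apply i))).integral_eq

theorem matInt_mean_eq_of_identDistrib {n : ℕ} (hn : 0 < n)
    {X : Fin n → Ω → Matrix (Fin d) (Fin d) ℝ} {Y : Ω → Matrix (Fin d) (Fin d) ℝ}
    (hX : ∀ k, IdentDistrib (X k) Y μ μ) (hint : ∀ k i j, Integrable (fun ω => X k ω i j) μ) :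
    matInt μ (fun ω => (n : ℝ)⁻¹ • ∑ k, X k ω) = matInt μ Y := by
  ext i j
  have hXY : ∀ k, ∫ ω, X k ω i j ∂μ = ∫ ω, Y ω i j ∂μ := fun k =>
    congrFun (congrFun (matInt_eq_of_identDistrib (hX k)) i) j
  simp only [matInt, of_apply, Matrix.smul_apply, Matrix.sum_apply, smul_eq_mul]
  rw [integral_const_mul, integral_finsetSum _ fun k _ => hint k i j]
  simp [hXY, hn.ne']

end MatInt

theorem stmt16_general {Ω : Type*} [MeasurableSpace Ω] (μ : Measure Ω)
    {d n : ℕ} (hn : 0 < n)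
    (Γ : Ω → Matrix (Fin d) (Fin d) ℝ) (Γi : Fin n → Ω → Matrix (Fin d) (Fin d) ℝ)
    (hΓmeas : Measurable Γ) (hΓimeas : ∀ i, Measurable (Γi i))
    (hbd : ∀ᵐ ω ∂μ, (Γ ω).PosSemidef ∧ (1 - Γ ω).PosSemidef)
    (hbdi : ∀ i, ∀ᵐ ω ∂μ, (Γi i ω).PosSemidef ∧ (1 - Γi i ω).PosSemidef)
    (hident : ∀ i, Measure.map (Γi i) μ = Measure.map Γ μ)
    (hint : ∀ i j : Fin d, Integrable (fun ω => Γ ω i j) μ)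
    (hinti : ∀ k, ∀ i j : Fin d, Integrable (fun ω => Γi k ω i j) μ)
    (hintt : ∀ i j : Fin d,
      Integrable (fun ω => psdSqrt ((n : ℝ)⁻¹ • ∑ k, (Γi k ω) ^ 2) i j) μ) :
    (∀ᵐ ω ∂μ,
      (psdSqrt ((n : ℝ)⁻¹ • ∑ k, (Γi k ω) ^ 2) - (n : ℝ)⁻¹ • ∑ k, Γi k ω).PosSemidef) ∧
    ((matInt μ fun ω => (Γ ω) ^ 2)
        - (matInt μ fun ω => psdSqrt ((n : ℝ)⁻¹ • ∑ k, (Γi k ω) ^ 2)) ^ 2).trace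
      ≤ ((matInt μ fun ω => (Γ ω) ^ 2) - (matInt μ Γ) ^ 2).trace := by
  set G : Ω → Matrix (Fin d) (Fin d) ℝ := fun ω => psdSqrt ((n : ℝ)⁻¹ • ∑ k, Γi k ω ^ 2)
  set Av : Ω → Matrix (Fin d) (Fin d) ℝ := fun ω => (n : ℝ)⁻¹ • ∑ k, Γi k ω
  have hgap : ∀ᵐ ω ∂μ, (G ω - Av ω).PosSemidef := by
    filter_upwards [ae_all_iff.mpr hbdi] with ω hω
    exact posSemidef_psdSqrt_mean_sq_sub_mean _ fun k => (hω k).1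
  refine ⟨hgap, ?_⟩
  have hintAv : ∀ i j, Integrable (fun ω => Av ω i j) μ := fun i j => by
    simpa only [Av, Matrix.smul_apply, Matrix.sum_apply, smul_eq_mul] using
      (integrable_finsetSum _ fun k _ => hinti k i j).const_mul (n : ℝ)⁻¹
  have hmean : matInt μ Av = matInt μ Γ := matInt_mean_eq_of_identDistrib hn
    (fun k => ⟨(hΓimeas k).aemeasurable, hΓmeas.aemeasurable, hident k⟩) hinti
  have hEgap : (matInt μ G - matInt μ Γ).PosSemidef := by
    rw [← hmean, ← matInt_sub hintt hintAv]
    exact posSemidef_matInt (fun i j => (hintt i j).sub (hintAv i j)) hgap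
  have := (posSemidef_matInt hint (hbd.mono fun _ h => h.1)).trace_sq_le_trace_sq hEgap
  rw [trace_sub, trace_sub]
  linarith

/-- For i.i.d. random symmetric matrices `0 ⪯ Γ⁽ⁱ⁾ ⪯ I` distributed as `Γ` and
`Γ̃ = √((1/n) Σᵢ (Γ⁽ⁱ⁾)²)`: almost surely `Γ̃ ⪰ (1/n) Σᵢ Γ⁽ⁱ⁾`, and consequently
`Tr(E[Γ²] − E[Γ̃]²) ≤ Tr(E[Γ²] − E[Γ]²)`. -/
theorem stmt16 {Ω : Type*} [MeasurableSpace Ω] (μ : Measure Ω) [IsProbabilityMeasure μ]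
    {d n : ℕ} (hn : 0 < n)
    (Γ : Ω → Matrix (Fin d) (Fin d) ℝ) (Γi : Fin n → Ω → Matrix (Fin d) (Fin d) ℝ)
    (hΓmeas : Measurable Γ) (hΓimeas : ∀ i, Measurable (Γi i))
    (hbd : ∀ᵐ ω ∂μ, (Γ ω).PosSemidef ∧ (1 - Γ ω).PosSemidef)
    (hbdi : ∀ i, ∀ᵐ ω ∂μ, (Γi i ω).PosSemidef ∧ (1 - Γi i ω).PosSemidef)
    (hindep : iIndepFun (m := fun _ => matrixMeasurableSpace) Γi μ)
    (hident : ∀ i, Measure.map (Γi i) μ = Measure.map Γ μ)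
    (hint : ∀ i j : Fin d, Integrable (fun ω => Γ ω i j) μ)
    (hint2 : ∀ i j : Fin d, Integrable (fun ω => ((Γ ω) ^ 2) i j) μ)
    (hinti : ∀ k, ∀ i j : Fin d, Integrable (fun ω => Γi k ω i j) μ)
    (hintt : ∀ i j : Fin d,
      Integrable (fun ω => psdSqrt ((n : ℝ)⁻¹ • ∑ k, (Γi k ω) ^ 2) i j) μ) :
    (∀ᵐ ω ∂μ,
      (psdSqrt ((n : ℝ)⁻¹ • ∑ k, (Γi k ω) ^ 2) - (n : ℝ)⁻¹ • ∑ k, Γi k ω).PosSemidef) ∧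
    ((matInt μ fun ω => (Γ ω) ^ 2)
        - (matInt μ fun ω => psdSqrt ((n : ℝ)⁻¹ • ∑ k, (Γi k ω) ^ 2)) ^ 2).trace
      ≤ ((matInt μ fun ω => (Γ ω) ^ 2) - (matInt μ Γ) ^ 2).trace :=
  stmt16_general μ hn Γ Γi hΓmeas hΓimeas hbd hbdi hident hint hinti hintt
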